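/- Let μ be a probability measure on S, φ : S → ℝ^d with ‖φ(s)‖ ≤ 1 a.s., γ ∈ (0,1), and suppose (s, s') is a pair of random states each marginally distributed as μ. Assume λ_φ := λ_min(E_{s∼μ}[φ(s)φ(s)ᵀ]) > 0. Then for B := E[φ(s)(γφ(s') − φ(s))ᵀ] and every θ ∈ ℝ^d, θᵀBθ ≤ −(1−γ)λ_φ‖θ‖². -/

import Mathlib

/-!
Write `f s = ⟪θ, φ s⟫`. Then `θᵀBθ = E[f(s) (γ f(s') - f(s))]`, and `f(s) f(s') ≤ (f(s)² + f(s')²) / 2`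
together with the equality of the marginals gives `θᵀBθ ≤ (γ - 1) E_μ[f²]`; finally
`E_μ[f²] = θᵀ E_μ[φ φᵀ] θ ≥ λ_φ ‖θ‖²`.
-/

open MeasureTheory Matrix

open scoped RealInnerProductSpace

section SecondMoment

variable {ι α : Type*} [Fintype ι] [MeasurableSpace α] {ν : Measure α}

theorem sum_sum_integral_mul_eq_integral_inner_mul_inner {u w : α → EuclideanSpace ℝ ι}
    (hu : MemLp u 2 ν) (hw : MemLp w 2 ν) (v : EuclideanSpace ℝ ι) :
    ∑ i, ∑ j, v i * (∫ a, u a i * w a j ∂ν) * v j = ∫ a, ⟪v, u a⟫ * ⟪v, w a⟫ ∂ν := by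
  have hcoord {x : α → EuclideanSpace ℝ ι} (hx : MemLp x 2 ν) (i : ι) :
      MemLp (fun a => x a i) 2 ν :=
    (EuclideanSpace.proj (𝕜 := ℝ) i).comp_memLp' hx
  have hint (i j : ι) : Integrable (fun a => v i * (u a i * w a j) * v j) ν :=
    (((hcoord hu i).integrable_mul (hcoord hw j)).const_mul (v i)).mul_const (v j)
  have hexpand (a : α) :
      ⟪v, u a⟫ * ⟪v, w a⟫ = ∑ i, ∑ j, v i * (u a i * w a j) * v j := by
    simp only [PiLp.inner_apply, RCLike.inner_apply, conj_trivial, Finset.sum_mul_sum]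
    exact Finset.sum_congr rfl fun i _ => Finset.sum_congr rfl fun j _ => by ring
  simp_rw [hexpand, ← integral_const_mul, ← integral_mul_const]
  rw [integral_finsetSum _ fun i _ => integrable_finsetSum _ fun j _ => hint i j]
  exact Finset.sum_congr rfl fun i _ => (integral_finsetSum _ fun j _ => hint i j).symm

end SecondMoment

section Coupling

variable {α : Type*} [MeasurableSpace α] {μ : Measure α} {π : Measure (α × α)}

theorem integral_mul_sub_le_of_map_eq (hfst : π.map Prod.fst = μ) (hsnd : π.map Prod.snd = μ)
    {f : α → ℝ} (hf : MemLp f 2 μ) {γ : ℝ} (hγ : 0 ≤ γ) :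
    ∫ p, f p.1 * (γ * f p.2 - f p.1) ∂π ≤ (γ - 1) * ∫ x, f x ^ 2 ∂μ := by
  have hf₁ : MemLp (fun p : α × α => f p.1) 2 π :=
    hf.comp_measurePreserving ⟨measurable_fst, hfst⟩
  have hf₂ : MemLp (fun p : α × α => f p.2) 2 π :=
    hf.comp_measurePreserving ⟨measurable_snd, hsnd⟩
  have hsq₁ : ∫ p, f p.1 ^ 2 ∂π = ∫ x, f x ^ 2 ∂μ := by
    subst hfst; exact (integral_map measurable_fst.aemeasurable (hf.1.pow 2)).symm
  have hsq₂ : ∫ p, f p.2 ^ 2 ∂π = ∫ x, f x ^ 2 ∂μ := by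
    subst hsnd; exact (integral_map measurable_snd.aemeasurable (hf.1.pow 2)).symm
  have hamgm (p : α × α) : f p.1 * (γ * f p.2 - f p.1)
      ≤ γ / 2 * f p.1 ^ 2 + γ / 2 * f p.2 ^ 2 - f p.1 ^ 2 := by
    nlinarith [mul_nonneg hγ (sq_nonneg (f p.1 - f p.2))]
  have hI₁ : Integrable (fun p : α × α => f p.1 ^ 2) π := hf₁.integrable_sq
  have hI₂ : Integrable (fun p : α × α => f p.2 ^ 2) π := hf₂.integrable_sq
  have hI : Integrable (fun p : α × α => γ / 2 * f p.1 ^ 2 + γ / 2 * f p.2 ^ 2) π :=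
    (hI₁.const_mul _).fun_add (hI₂.const_mul _)
  calc ∫ p, f p.1 * (γ * f p.2 - f p.1) ∂π
      ≤ ∫ p, γ / 2 * f p.1 ^ 2 + γ / 2 * f p.2 ^ 2 - f p.1 ^ 2 ∂π :=
        integral_mono (hf₁.integrable_mul ((hf₂.const_mul γ).sub hf₁)) (hI.sub hI₁) hamgm
    _ = γ / 2 * ∫ x, f x ^ 2 ∂μ + γ / 2 * ∫ x, f x ^ 2 ∂μ - ∫ x, f x ^ 2 ∂μ := by
        rw [integral_sub hI hI₁, integral_add (hI₁.const_mul _) (hI₂.const_mul _),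
          integral_const_mul, integral_const_mul, hsq₁, hsq₂]
    _ = (γ - 1) * ∫ x, f x ^ 2 ∂μ := by ring

end Coupling

theorem stmt_8_general {S : Type*} [MeasurableSpace S] (d : ℕ)
    (μ : Measure S) [IsProbabilityMeasure μ]
    (π : Measure (S × S)) [IsProbabilityMeasure π]
    (hfst : π.map Prod.fst = μ) (hsnd : π.map Prod.snd = μ)
    (φ : S → EuclideanSpace ℝ (Fin d)) (hmeas : Measurable φ)
    (hφ : ∀ᵐ s ∂μ, ‖φ s‖ ≤ 1)
    (γ : ℝ) (hγ0 : 0 < γ) (hγ1 : γ < 1)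
    (lamphi : ℝ)
    (hmin : ∀ θ : EuclideanSpace ℝ (Fin d),
      lamphi * ‖θ‖ ^ 2 ≤ ∑ i, ∑ j, θ i * (∫ s, φ s i * φ s j ∂μ) * θ j)
    (B : Matrix (Fin d) (Fin d) ℝ)
    (hB : ∀ i j, B i j = ∫ p, φ p.1 i * (γ * φ p.2 j - φ p.1 j) ∂π) :
    ∀ θ : EuclideanSpace ℝ (Fin d),
      θ ⬝ᵥ B.mulVec θ ≤ -((1 - γ) * lamphi) * ‖θ‖ ^ 2 := by
  intro θ
  have hφL2 : MemLp φ 2 μ := .of_bound hmeas.aestronglyMeasurable 1 hφ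
  have hφ₁ : MemLp (fun p : S × S => φ p.1) 2 π :=
    hφL2.comp_measurePreserving ⟨measurable_fst, hfst⟩
  have hφ₂ : MemLp (fun p : S × S => φ p.2) 2 π :=
    hφL2.comp_measurePreserving ⟨measurable_snd, hsnd⟩
  have hquad : θ ⬝ᵥ B *ᵥ θ = ∫ p, ⟪θ, φ p.1⟫ * (γ * ⟪θ, φ p.2⟫ - ⟪θ, φ p.1⟫) ∂π := by
    have hw : MemLp (fun p : S × S => γ • φ p.2 - φ p.1) 2 π := (hφ₂.const_smul γ).sub hφ₁
    have := sum_sum_integral_mul_eq_integral_inner_mul_inner hφ₁ hw θ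
    simp only [PiLp.sub_apply, PiLp.smul_apply, smul_eq_mul, inner_sub_right,
      real_inner_smul_right, ← hB] at this
    rw [← this, ← toBilin'_apply', toBilin'_apply]
  have hlower : lamphi * ‖θ‖ ^ 2 ≤ ∫ s, ⟪θ, φ s⟫ ^ 2 ∂μ := by
    simpa only [sum_sum_integral_mul_eq_integral_inner_mul_inner hφL2 hφL2, ← sq] using hmin θ
  have hf : MemLp (fun s => ⟪θ, φ s⟫) 2 μ := (innerSL ℝ θ).comp_memLp' hφL2
  calc θ ⬝ᵥ B *ᵥ θ ≤ (γ - 1) * ∫ s, ⟪θ, φ s⟫ ^ 2 ∂μ :=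
        hquad ▸ integral_mul_sub_le_of_map_eq hfst hsnd hf hγ0.le
    _ ≤ -((1 - γ) * lamphi) * ‖θ‖ ^ 2 := by nlinarith

theorem stmt_8 {S : Type*} [MeasurableSpace S] (d : ℕ)
    (μ : Measure S) [IsProbabilityMeasure μ]
    (π : Measure (S × S)) [IsProbabilityMeasure π]
    (hfst : π.map Prod.fst = μ) (hsnd : π.map Prod.snd = μ)
    (φ : S → EuclideanSpace ℝ (Fin d)) (hmeas : Measurable φ)
    (hφ : ∀ᵐ s ∂μ, ‖φ s‖ ≤ 1)
    (γ : ℝ) (hγ0 : 0 < γ) (hγ1 : γ < 1)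
    (lamphi : ℝ) (hlam : 0 < lamphi)
    (hmin : ∀ θ : EuclideanSpace ℝ (Fin d),
      lamphi * ‖θ‖ ^ 2 ≤ ∑ i, ∑ j, θ i * (∫ s, φ s i * φ s j ∂μ) * θ j)
    (B : Matrix (Fin d) (Fin d) ℝ)
    (hB : ∀ i j, B i j = ∫ p, φ p.1 i * (γ * φ p.2 j - φ p.1 j) ∂π) :
    ∀ θ : EuclideanSpace ℝ (Fin d),
      θ ⬝ᵥ B.mulVec θ ≤ -((1 - γ) * lamphi) * ‖θ‖ ^ 2 :=
  stmt_8_general d μ π hfst hsnd φ hmeas hφ γ hγ0 hγ1 lamphi hmin B hB
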